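/- For every finite simple graph G, the intersection ker(G) of all critical independent sets of G is itself a critical independent set; in particular, G has a unique inclusion-minimal critical independent set, namely ker(G). -/
import Mathlib


open Finset

namespace CritGraph

variable {V : Type*} [Fintype V] [DecidableEq V]

/-- The neighborhood of a set of vertices `X`:
all vertices having at least one neighbor in `X`. -/
def nbhd (G : SimpleGraph V) [DecidableRel G.Adj] (X : Finset V) : Finset V :=
  univ.filter fun v => ∃ x ∈ X, G.Adj v x

/-- The difference `d(X) = |X| - |N(X)|` of a set of vertices `X`. -/
def diff (G : SimpleGraph V) [DecidableRel G.Adj] (X : Finset V) : ℤ :=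
  (X.card : ℤ) - ((nbhd G X).card : ℤ)

/-- A set of vertices is independent if no two of its vertices are adjacent. -/
def IsIndep (G : SimpleGraph V) (S : Finset V) : Prop :=
  ∀ u ∈ S, ∀ v ∈ S, ¬ G.Adj u v

instance (G : SimpleGraph V) [DecidableRel G.Adj] : DecidablePred (IsIndep G) := fun S =>
  inferInstanceAs (Decidable (∀ u ∈ S, ∀ v ∈ S, ¬ G.Adj u v))

/-- The critical difference `d_c(G) = max {d(X) : X ⊆ V}`. -/
def dC (G : SimpleGraph V) [DecidableRel G.Adj] : ℤ :=
  (univ : Finset V).powerset.sup' (Finset.powerset_nonempty _) (diff G)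

/-- The critical independence difference `id_c(G) = max {d(I) : I independent}`. -/
def idC (G : SimpleGraph V) [DecidableRel G.Adj] : ℤ :=
  ((univ : Finset V).powerset.filter (IsIndep G)).sup'
    ⟨∅, by simp [IsIndep]⟩ (diff G)

/-- `A` is a critical independent set: `A` is independent and
`d(A) = max {d(I) : I independent}`. -/
def IsCritIndep (G : SimpleGraph V) [DecidableRel G.Adj] (A : Finset V) : Prop :=
  IsIndep G A ∧ ∀ I : Finset V, IsIndep G I → diff G I ≤ diff G A

instance (G : SimpleGraph V) [DecidableRel G.Adj] : DecidablePred (IsCritIndep G) := fun A =>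
  inferInstanceAs (Decidable (IsIndep G A ∧ ∀ I : Finset V, IsIndep G I → diff G I ≤ diff G A))

/-- `ker(G)`: the intersection of all critical independent sets of `G`. -/
def kerG (G : SimpleGraph V) [DecidableRel G.Adj] : Finset V :=
  univ.filter fun v => ∀ A : Finset V, IsCritIndep G A → v ∈ A

/-- `G - v`: the induced subgraph of `G` on `V \ {v}`. -/
def deleteVert (G : SimpleGraph V) (v : V) : SimpleGraph {u : V // u ≠ v} :=
  G.comap Subtype.val

instance (G : SimpleGraph V) (v : V) [DecidableRel G.Adj] :
    DecidableRel (deleteVert G v).Adj := fun a b =>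
  inferInstanceAs (Decidable (G.Adj a.val b.val))

/-- `S` is an inclusion-minimal independent set with positive difference. -/
def MinPosIndep (G : SimpleGraph V) [DecidableRel G.Adj] (S : Finset V) : Prop :=
  IsIndep G S ∧ 0 < diff G S ∧ ∀ S' ⊂ S, ¬ (IsIndep G S' ∧ 0 < diff G S')

/-- `S` is a maximum independent set. -/
def IsMaxIndep (G : SimpleGraph V) (S : Finset V) : Prop :=
  IsIndep G S ∧ ∀ I : Finset V, IsIndep G I → I.card ≤ S.card

instance (G : SimpleGraph V) [DecidableRel G.Adj] : DecidablePred (IsMaxIndep G) := fun S =>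
  inferInstanceAs (Decidable (IsIndep G S ∧ ∀ I : Finset V, IsIndep G I → I.card ≤ S.card))

/-- `core(G)`: the intersection of all maximum independent sets of `G`. -/
def coreG (G : SimpleGraph V) [DecidableRel G.Adj] : Finset V :=
  univ.filter fun v => ∀ A : Finset V, IsMaxIndep G A → v ∈ A


lemma mem_nbhd {G : SimpleGraph V} [DecidableRel G.Adj] {X : Finset V} {v : V} :
    v ∈ nbhd G X ↔ ∃ x ∈ X, G.Adj v x := by simp [nbhd]

lemma nbhd_mono {G : SimpleGraph V} [DecidableRel G.Adj] {X Y : Finset V} (h : X ⊆ Y) :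
    nbhd G X ⊆ nbhd G Y := by
  intro v hv
  rw [mem_nbhd] at hv ⊢
  obtain ⟨x, hx, hadj⟩ := hv
  exact ⟨x, h hx, hadj⟩

lemma nbhd_union {G : SimpleGraph V} [DecidableRel G.Adj] (X Y : Finset V) :
    nbhd G (X ∪ Y) = nbhd G X ∪ nbhd G Y := by
  ext v
  simp only [mem_nbhd, Finset.mem_union]
  constructor
  · rintro ⟨x, hx | hx, hadj⟩
    · exact Or.inl ⟨x, hx, hadj⟩
    · exact Or.inr ⟨x, hx, hadj⟩
  · rintro (⟨x, hx, hadj⟩ | ⟨x, hx, hadj⟩)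
    · exact ⟨x, Or.inl hx, hadj⟩
    · exact ⟨x, Or.inr hx, hadj⟩

/-- `X \ N(X)` is independent. -/
lemma isIndep_sdiff_nbhd (G : SimpleGraph V) [DecidableRel G.Adj] (X : Finset V) :
    IsIndep G (X \ nbhd G X) := by
  intro u hu v hv hadj
  rw [Finset.mem_sdiff] at hu hv
  exact hu.2 (mem_nbhd.2 ⟨v, hv.1, hadj⟩)

/-- `d(X) ≤ d(X \ N(X))`. -/
lemma diff_le_diff_sdiff_nbhd (G : SimpleGraph V) [DecidableRel G.Adj] (X : Finset V) :
    diff G X ≤ diff G (X \ nbhd G X) := by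
  set I := X \ nbhd G X with hI
  set S := X ∩ nbhd G X with hS
  have hcard : I.card + S.card = X.card := Finset.card_sdiff_add_card_inter X _
  have hsub : nbhd G I ∪ S ⊆ nbhd G X := by
    intro v hv
    rcases Finset.mem_union.1 hv with hv | hv
    · exact nbhd_mono Finset.sdiff_subset hv
    · exact (Finset.mem_inter.1 hv).2
  have hdisj : Disjoint (nbhd G I) S := by
    rw [Finset.disjoint_left]
    intro v hv hvS
    rw [mem_nbhd] at hv
    obtain ⟨u, hu, hadj⟩ := hv
    rw [hI, Finset.mem_sdiff] at hu
    exact hu.2 (mem_nbhd.2 ⟨v, (Finset.mem_inter.1 hvS).1, hadj.symm⟩)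
  have hle : (nbhd G I).card + S.card ≤ (nbhd G X).card := by
    rw [← Finset.card_union_of_disjoint hdisj]
    exact Finset.card_le_card hsub
  unfold diff
  omega

/-- Every independent set realizes at most `idC`. -/
lemma diff_le_idC_of_indep (G : SimpleGraph V) [DecidableRel G.Adj] {I : Finset V}
    (hI : IsIndep G I) : diff G I ≤ idC G := by
  apply Finset.le_sup'
  simp [hI]

/-- Every set realizes at most `idC`. -/
lemma diff_le_idC (G : SimpleGraph V) [DecidableRel G.Adj] (X : Finset V) :
    diff G X ≤ idC G :=
  (diff_le_diff_sdiff_nbhd G X).trans (diff_le_idC_of_indep G (isIndep_sdiff_nbhd G X))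

/-- A critical independent set exists. -/
lemma exists_isCritIndep (G : SimpleGraph V) [DecidableRel G.Adj] :
    ∃ A : Finset V, IsCritIndep G A := by
  obtain ⟨A, hA, hval⟩ := Finset.exists_mem_eq_sup'
    (⟨∅, by simp [IsIndep]⟩ : ((univ : Finset V).powerset.filter (IsIndep G)).Nonempty)
    (diff G)
  rw [Finset.mem_filter] at hA
  refine ⟨A, hA.2, fun I hIind => ?_⟩
  rw [← hval]
  exact diff_le_idC_of_indep G hIind

lemma diff_eq_of_isCritIndep {G : SimpleGraph V} [DecidableRel G.Adj] {A : Finset V}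
    (hA : IsCritIndep G A) : diff G A = idC G := by
  apply le_antisymm (diff_le_idC_of_indep G hA.1)
  obtain ⟨B, hB⟩ := exists_isCritIndep G
  calc idC G = diff G B := (diff_eq_of_isCritIndep' hB).symm
    _ ≤ diff G A := hA.2 B hB.1
where
  diff_eq_of_isCritIndep' {B : Finset V} (hB : IsCritIndep G B) : diff G B = idC G := by
    apply le_antisymm (diff_le_idC_of_indep G hB.1)
    apply Finset.sup'_le
    intro I hI
    rw [Finset.mem_filter] at hI
    exact hB.2 I hI.2

/-- The intersection of two critical independent sets is critical independent. -/
lemma isCritIndep_inter {G : SimpleGraph V} [DecidableRel G.Adj] {A B : Finset V}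
    (hA : IsCritIndep G A) (hB : IsCritIndep G B) : IsCritIndep G (A ∩ B) := by
  have hind : IsIndep G (A ∩ B) := fun u hu v hv =>
    hA.1 u (Finset.mem_inter.1 hu).1 v (Finset.mem_inter.1 hv).1
  have hcard : ((A ∪ B).card : ℤ) + (A ∩ B).card = A.card + B.card := by
    exact_mod_cast congrArg Nat.cast (Finset.card_union_add_card_inter A B)
  have hnbU : nbhd G (A ∪ B) = nbhd G A ∪ nbhd G B := nbhd_union A B
  have hnbI : nbhd G (A ∩ B) ⊆ nbhd G A ∩ nbhd G B :=
    Finset.subset_inter (nbhd_mono Finset.inter_subset_left)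
      (nbhd_mono Finset.inter_subset_right)
  have hnbcard : ((nbhd G (A ∪ B)).card : ℤ) + (nbhd G (A ∩ B)).card
      ≤ (nbhd G A).card + (nbhd G B).card := by
    have h1 : (nbhd G (A ∩ B)).card ≤ (nbhd G A ∩ nbhd G B).card :=
      Finset.card_le_card hnbI
    have h2 : (nbhd G A ∪ nbhd G B).card + (nbhd G A ∩ nbhd G B).card
        = (nbhd G A).card + (nbhd G B).card := Finset.card_union_add_card_inter _ _
    rw [hnbU]
    exact_mod_cast by omega
  have hsum : diff G A + diff G B ≤ diff G (A ∪ B) + diff G (A ∩ B) := by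
    unfold diff
    omega
  have hU : diff G (A ∪ B) ≤ idC G := diff_le_idC G (A ∪ B)
  have hAe : diff G A = idC G := diff_eq_of_isCritIndep hA
  have hBe : diff G B = idC G := diff_eq_of_isCritIndep hB
  refine ⟨hind, fun I hI => ?_⟩
  have : diff G I ≤ idC G := diff_le_idC_of_indep G hI
  omega

/-- `ker(G)` is itself a critical independent set; in particular, `G` has a
unique inclusion-minimal critical independent set, namely `ker(G)`. -/
theorem kerG_isCritIndep_and_unique_minimal (G : SimpleGraph V) [DecidableRel G.Adj] :
    IsCritIndep G (kerG G) ∧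
      ∀ A : Finset V, IsCritIndep G A →
        (∀ B : Finset V, IsCritIndep G B → B ⊆ A → B = A) → A = kerG G := by
  -- take a critical independent set of minimum cardinality
  have hne : ((univ : Finset V).powerset.filter (IsCritIndep G)).Nonempty := by
    obtain ⟨A, hA⟩ := exists_isCritIndep G
    exact ⟨A, by simp [hA]⟩
  obtain ⟨A₀, hA₀mem, hA₀min⟩ :=
    Finset.exists_min_image ((univ : Finset V).powerset.filter (IsCritIndep G))
      Finset.card hne
  rw [Finset.mem_filter] at hA₀mem
  have hA₀ : IsCritIndep G A₀ := hA₀mem.2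
  -- A₀ is contained in every critical independent set
  have hsub : ∀ B : Finset V, IsCritIndep G B → A₀ ⊆ B := by
    intro B hB
    have hint : IsCritIndep G (A₀ ∩ B) := isCritIndep_inter hA₀ hB
    have hle : A₀.card ≤ (A₀ ∩ B).card :=
      hA₀min _ (by simp [hint])
    have hsub' : A₀ ∩ B ⊆ A₀ := Finset.inter_subset_left
    have : A₀ ∩ B = A₀ := Finset.eq_of_subset_of_card_le hsub' hle
    rw [← this]
    exact Finset.inter_subset_right
  -- hence kerG G = A₀
  have hker : kerG G = A₀ := by
    ext v
    simp only [kerG, Finset.mem_filter, Finset.mem_univ, true_and]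
    constructor
    · intro h; exact h A₀ hA₀
    · intro hv B hB; exact hsub B hB hv
  constructor
  · rw [hker]; exact hA₀
  · intro A hA hmin
    rw [hker]
    exact (hmin A₀ hA₀ (hsub A hA)).symm

end CritGraph
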